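/- arXiv:1211.6069 — 2 statements merged into one kernel-verified Lean document; each statement's English description precedes it below -/
import Mathlib

section
/- Let m be a finite measure on the torus ℝ/ℤ and φ a Schwartz function on ℝ. Define the measure m′ on ℝ by dm′(x) = φ(x) dm({x}), where {x} denotes the fractional part. Then for all ξ ∈ ℝ, m̂′(ξ) = Σ_{k∈ℤ} m̂(k) φ̂(ξ − k). -/
/-!
Put `f x = e^{-2πixξ} φ x`, so that `𝓕 f k = 𝓕 φ (k + ξ)`. Integrating against the
periodization of `m₀` means integrating the periodized function `∑ₙ f (y + n)` against `m₀`, and by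
Poisson summation this is the Fourier series `∑ₖ 𝓕 f k e^{2πiky}`. Integrating it term by term
and replacing `k` by `-k` gives the formula. Both exchanges of sum and integral hold because `f` and
`𝓕 f` decay like `|x|⁻²` while `m₀` is finite and supported in the compact set `[0, 1]`.
-/

open MeasureTheory Real Filter Asymptotics
open scoped FourierTransform

namespace MeasureTheory

variable {α ι E : Type*} [MeasurableSpace α] {μ : Measure α} [IsFiniteMeasure μ]
  [NormedAddCommGroup E] {F : ι → α → E} {c : ι → ℝ}

lemma summable_integral_norm_of_ae_norm_le (hc : Summable c) (hF : ∀ i, ∀ᵐ a ∂μ, ‖F i a‖ ≤ c i) :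
    Summable fun i => ∫ a, ‖F i a‖ ∂μ := by
  refine (hc.mul_right (μ.real Set.univ)).of_norm_bounded fun i => ?_
  exact norm_integral_le_of_norm_le_const ((hF i).mono fun a ha => by rwa [norm_norm])

lemma integral_tsum_of_ae_norm_le [Countable ι] [NormedSpace ℝ E]
    (hF_meas : ∀ i, AEStronglyMeasurable (F i) μ) (hc : Summable c)
    (hF : ∀ i, ∀ᵐ a ∂μ, ‖F i a‖ ≤ c i) :
    ∫ a, ∑' i, F i a ∂μ = ∑' i, ∫ a, F i a ∂μ :=
  (integral_tsum_of_summable_integral_norm (fun i => .of_bound (hF_meas i) (c i) (hF i))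
    (summable_integral_norm_of_ae_norm_le hc hF)).symm

lemma integral_sum_map_add_int {μ : Measure ℝ} [IsFiniteMeasure μ] {f : ℝ → ℂ} (hf : Continuous f)
    {c : ℤ → ℝ} (hc : Summable c) (hbound : ∀ n : ℤ, ∀ᵐ y ∂μ, ‖f (y + n)‖ ≤ c n) :
    ∫ x, f x ∂(Measure.sum fun n : ℤ => Measure.map (fun y => y + (n : ℝ)) μ) =
      ∑' n : ℤ, ∫ y, f (y + n) ∂μ := by
  have hmap {G : Type} [NormedAddCommGroup G] [NormedSpace ℝ G] {g : ℝ → G} (hg : Continuous g)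
      (n : ℤ) : ∫ x, g x ∂(Measure.map (fun y => y + (n : ℝ)) μ) = ∫ y, g (y + n) ∂μ :=
    integral_map (measurable_add_const _).aemeasurable hg.aestronglyMeasurable
  have hint : ∀ n : ℤ, Integrable (fun y => f (y + n)) μ := fun n =>
    .of_bound (hf.comp (continuous_add_const _)).aestronglyMeasurable (c n) (hbound n)
  refine (integral_sum_measure (integrable_sum_measure (fun n => ?_) ?_)).trans
    (tsum_congr (hmap hf))
  · exact (integrable_map_measure hf.aestronglyMeasurable
      (measurable_add_const _).aemeasurable).mpr (hint n)
  · simpa only [hmap hf.norm] using summable_integral_norm_of_ae_norm_le hc hbound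

lemma exists_summable_ae_norm_comp_add_int_le {μ : Measure ℝ} {K : Set ℝ} (hK : IsCompact K)
    (hμK : μ Kᶜ = 0) {f : ℝ → ℂ} (hf : Continuous f) {b : ℝ} (hb : 1 < b)
    (hf_decay : f =O[cocompact ℝ] (|·| ^ (-b))) :
    ∃ c : ℤ → ℝ, Summable c ∧ ∀ n : ℤ, ∀ᵐ y ∂μ, ‖f (y + n)‖ ≤ c n := by
  let g : C(ℝ, ℂ) := ⟨f, hf⟩
  let K' : TopologicalSpace.Compacts ℝ := ⟨K, hK⟩
  refine ⟨fun n => ‖(g.comp (ContinuousMap.addRight n)).restrict K'‖, ?_, fun n => ?_⟩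
  · exact summable_of_isBigO (Real.summable_abs_int_rpow hb)
      ((isBigO_norm_restrict_cocompact g (zero_lt_one.trans hb) hf_decay K').comp_tendsto
        Int.tendsto_coe_cofinite)
  · have hK_ae : ∀ᵐ y ∂μ, y ∈ K := hμK
    filter_upwards [hK_ae] with y hy
    exact ((g.comp (ContinuousMap.addRight n)).restrict K').norm_coe_le_norm ⟨y, hy⟩

lemma integral_tsum_fourier_mul {μ : Measure ℝ} [IsFiniteMeasure μ] {c : ℤ → ℂ}
    (hc : Summable fun k => ‖c k‖) :
    ∫ y, ∑' k : ℤ, c k * fourier k (y : UnitAddCircle) ∂μ =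
      ∑' k : ℤ, c k * ∫ y, fourier k (y : UnitAddCircle) ∂μ := by
  have hcont : ∀ k : ℤ, Continuous fun y : ℝ => fourier k (y : UnitAddCircle) := fun k =>
    (map_continuous (fourier k)).comp (AddCircle.continuous_mk' 1)
  rw [integral_tsum_of_ae_norm_le (fun k => ((hcont k).const_mul (c k)).aestronglyMeasurable) hc
    fun k => ae_of_all _ fun y => by rw [norm_mul, fourier_apply, Circle.norm_coe, mul_one]]
  exact tsum_congr fun k => integral_const_mul _ _

theorem integral_sum_map_add_int_eq_tsum_fourier {μ : Measure ℝ} [IsFiniteMeasure μ] {K : Set ℝ}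
    (hK : IsCompact K) (hμK : μ Kᶜ = 0) {f : ℝ → ℂ} (hf : Continuous f) {b : ℝ} (hb : 1 < b)
    (hf_decay : f =O[cocompact ℝ] (|·| ^ (-b))) (h𝓕f_decay : 𝓕 f =O[cocompact ℝ] (|·| ^ (-b))) :
    ∫ x, f x ∂(Measure.sum fun n : ℤ => Measure.map (fun y => y + (n : ℝ)) μ) =
      ∑' k : ℤ, 𝓕 f k * ∫ y, fourier k (y : UnitAddCircle) ∂μ := by
  obtain ⟨c, hc, hbound⟩ := exists_summable_ae_norm_comp_add_int_le hK hμK hf hb hf_decay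
  have h𝓕f_summable : Summable fun k : ℤ => ‖𝓕 f k‖ :=
    summable_of_isBigO (Real.summable_abs_int_rpow hb)
      (h𝓕f_decay.norm_left.comp_tendsto Int.tendsto_coe_cofinite)
  calc ∫ x, f x ∂(Measure.sum fun n : ℤ => Measure.map (fun y => y + (n : ℝ)) μ)
      = ∑' n : ℤ, ∫ y, f (y + n) ∂μ := integral_sum_map_add_int hf hc hbound
    _ = ∫ y, ∑' n : ℤ, f (y + n) ∂μ :=
      (integral_tsum_of_ae_norm_le
        (fun n => (hf.comp (continuous_add_const _)).aestronglyMeasurable) hc hbound).symm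
    _ = ∫ y, ∑' k : ℤ, 𝓕 f k * fourier k (y : UnitAddCircle) ∂μ := by
      simp_rw [Real.tsum_eq_tsum_fourier_of_rpow_decay hf hb hf_decay h𝓕f_decay]
    _ = ∑' k : ℤ, 𝓕 f k * ∫ y, fourier k (y : UnitAddCircle) ∂μ :=
      integral_tsum_fourier_mul h𝓕f_summable

end MeasureTheory

theorem Real.fourier_exp_mul (φ : ℝ → ℂ) (ξ t : ℝ) :
    𝓕 (fun x : ℝ => Complex.exp (-(2 * (π : ℂ) * Complex.I * x * ξ)) * φ x) t = 𝓕 φ (t + ξ) := by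
  simp only [Real.fourier_real_eq_integral_exp_smul, smul_eq_mul, ← mul_assoc, ← Complex.exp_add]
  congr with x
  push_cast
  ring_nf

/-- Lifting lemma (Lemma 9.A.4 of Wolff, first half). If m is a finite
measure on the circle, realized as a measure m₀ on [0,1) ⊂ ℝ, mper is its periodization
to ℝ, and φ is Schwartz, then the Fourier transform of dm′(x) = φ(x) dm({x}) satisfies
`m̂′(ξ) = Σ_{k∈ℤ} m̂(k) φ̂(ξ-k)`. -/
theorem stmt_6 (m₀ : Measure ℝ) [IsFiniteMeasure m₀]
    (hsupp : m₀ (Set.Ico (0 : ℝ) 1)ᶜ = 0)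
    (mper : Measure ℝ)
    (hper : mper = Measure.sum (fun n : ℤ => Measure.map (fun y => y + (n : ℝ)) m₀))
    (φ : SchwartzMap ℝ ℂ) :
    ∀ ξ : ℝ,
      ∫ x, Complex.exp (-(2 * (π : ℂ) * Complex.I * (x : ℂ) * (ξ : ℂ))) * φ x ∂mper
        = ∑' k : ℤ,
            (∫ x, Complex.exp (-(2 * (π : ℂ) * Complex.I * (k : ℂ) * (x : ℂ))) ∂m₀) *
              VectorFourier.fourierIntegral Real.fourierChar volume (innerₗ ℝ) (fun x => φ x) (ξ - k) := by
  intro ξ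
  subst hper
  set f : ℝ → ℂ := fun x => Complex.exp (-(2 * (π : ℂ) * Complex.I * x * ξ)) * φ x
  have h𝓕f : 𝓕 f = SchwartzMap.compSubConstCLM ℂ (-ξ) (𝓕 φ) := by
    ext t
    rw [Real.fourier_exp_mul, SchwartzMap.compSubConstCLM_apply, sub_neg_eq_add,
      SchwartzMap.fourier_coe]
  have hf_decay : f =O[cocompact ℝ] (|·| ^ (-2 : ℝ)) :=
    (isBigO_of_le _ fun x => by simp [f, Complex.norm_exp]).trans
      (φ.isBigO_cocompact_rpow (-2))
  rw [integral_sum_map_add_int_eq_tsum_fourier isCompact_Icc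
    (measure_mono_null (Set.compl_subset_compl.mpr Set.Ico_subset_Icc_self) hsupp)
    (by fun_prop) one_lt_two hf_decay (h𝓕f ▸ SchwartzMap.isBigO_cocompact_rpow _ (-2)),
    ← (Equiv.neg ℤ).tsum_eq]
  refine tsum_congr fun k => ?_
  rw [mul_comm, Equiv.neg_apply, Int.cast_neg, Real.fourier_exp_mul, neg_add_eq_sub]
  congr 1
  refine integral_congr_ae (ae_of_all _ fun y => ?_)
  simp only [fourier_coe_apply]
  push_cast
  ring_nf
end

section
/- Let m be a measure on ℝ/ℤ with |m̂(k)| ≤ C(1+|k|)^{−α} for all k ∈ ℤ and some α > 0, and let φ be a Schwartz function on ℝ. Define dm′(x) = φ(x) dm({x}). Then there is C′ > 0 with |m̂′(ξ)| ≤ C′(1+|ξ|)^{−α} for all ξ ∈ ℝ. -/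
/-!
With `e(t) = exp(2πit)` and `g x = e(-x ξ) φ x`, the integral of `g` against the periodisation of
`m` is `∫ ∑ₙ g (y + n) dm(y)`, and Poisson summation rewrites it as
`∑ₖ ĝ(k) m̂(-k) = ∑ₖ φ̂(k + ξ) m̂(-k)`. Peetre's inequality `1 + |ξ| ≤ (1 + |k + ξ|)(1 + |k|)` and
the rapid decay of `φ̂` bound the `k`-th term by `(1 + |ξ|)^(-α) (1 + |k + ξ|)^(-2)`, whose sum
over `k` is bounded uniformly in `ξ`.
-/

open MeasureTheory Real
open scoped FourierTransform

lemma one_add_abs_le_mul_one_add_abs (x y : ℝ) : 1 + |y| ≤ (1 + |x + y|) * (1 + |x|) := by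
  have : |y| ≤ |x + y| + |x| := by simpa using abs_sub (x + y) x
  nlinarith [abs_nonneg x, abs_nonneg (x + y)]

lemma one_add_abs_add_rpow_neg_mul_le {s : ℝ} (hs : 0 ≤ s) (x y : ℝ) :
    (1 + |x + y|) ^ (-s) * (1 + |x|) ^ (-s) ≤ (1 + |y|) ^ (-s) := by
  rw [← mul_rpow (by positivity) (by positivity)]
  exact rpow_le_rpow_of_nonpos (by positivity) (one_add_abs_le_mul_one_add_abs x y)
    (neg_nonpos.2 hs)

lemma one_add_abs_int_add_rpow_neg_le {s : ℝ} (hs : 0 ≤ s) (k : ℤ) (ξ : ℝ) :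
    (1 + |k + ξ|) ^ (-s) ≤ 2 ^ s * (1 + |((k + round ξ : ℤ) : ℝ)|) ^ (-s) := by
  have hround : (1 + |((k + round ξ : ℤ) : ℝ)|) / 2 ≤ 1 + |k + ξ| := by
    have : |((k + round ξ : ℤ) : ℝ)| ≤ |k + ξ| + |ξ - round ξ| := by
      have h := abs_sub ((k : ℝ) + ξ) (ξ - round ξ)
      rwa [show (k : ℝ) + ξ - (ξ - round ξ) = k + round ξ by ring, ← Int.cast_add] at h
    linarith [abs_sub_round ξ, abs_nonneg ((k : ℝ) + ξ)]
  calc (1 + |k + ξ|) ^ (-s) ≤ ((1 + |((k + round ξ : ℤ) : ℝ)|) / 2) ^ (-s) :=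
        rpow_le_rpow_of_nonpos (by positivity) hround (neg_nonpos.2 hs)
    _ = 2 ^ s * (1 + |((k + round ξ : ℤ) : ℝ)|) ^ (-s) := by
        rw [div_rpow (by positivity) zero_le_two, rpow_neg zero_le_two, div_inv_eq_mul, mul_comm]

lemma summable_one_add_abs_int_add_rpow_neg {s : ℝ} (hs : 1 < s) (ξ : ℝ) :
    Summable fun k : ℤ => (1 + |k + ξ|) ^ (-s) := by
  refine ((summable_one_div_int_add_rpow ξ s).2 hs).of_norm_bounded_eventually ?_
  have hfin : {k : ℤ | (k : ℝ) + ξ = 0}.Finite :=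
    Set.Subsingleton.finite fun k (hk : (k : ℝ) + ξ = 0) l (hl : (l : ℝ) + ξ = 0) => by
      exact_mod_cast (show (k : ℝ) = l by linarith)
  filter_upwards [hfin.compl_mem_cofinite] with k hk
  have hpos : 0 < |k + ξ| := abs_pos.2 hk
  rw [norm_of_nonneg (by positivity), rpow_neg (by positivity), one_div]
  exact inv_anti₀ (by positivity) (rpow_le_rpow hpos.le (by linarith) (by linarith))

lemma tsum_one_add_abs_int_add_rpow_neg_le {s : ℝ} (hs : 1 < s) (ξ : ℝ) :
    ∑' k : ℤ, (1 + |k + ξ|) ^ (-s) ≤ 2 ^ s * ∑' k : ℤ, (1 + |(k : ℝ)|) ^ (-s) := by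
  have hsum : Summable fun k : ℤ => (1 + |(k : ℝ)|) ^ (-s) := by
    simpa using summable_one_add_abs_int_add_rpow_neg hs 0
  have hshift := (Equiv.addRight (round ξ)).tsum_eq fun k : ℤ => (1 + |(k : ℝ)|) ^ (-s)
  rw [← hshift, ← tsum_mul_left]
  exact (summable_one_add_abs_int_add_rpow_neg hs ξ).tsum_le_tsum
    (one_add_abs_int_add_rpow_neg_le (by linarith) · ξ)
    (((Equiv.addRight (round ξ)).summable_iff.2 hsum).mul_left _)

lemma isBigO_cocompact_rpow_neg_of_norm_le {E : Type*} [NormedAddCommGroup E] {f : ℝ → E}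
    {D s : ℝ} (hs : 0 ≤ s) (hf : ∀ x, ‖f x‖ ≤ D * (1 + |x|) ^ (-s)) :
    f =O[Filter.cocompact ℝ] (|·| ^ (-s)) := by
  refine Asymptotics.IsBigO.of_bound |D| ?_
  filter_upwards [(isCompact_singleton (x := (0 : ℝ))).compl_mem_cocompact] with x hx
  have hx : 0 < |x| := abs_pos.2 hx
  calc ‖f x‖ ≤ D * (1 + |x|) ^ (-s) := hf x
    _ ≤ |D| * |x| ^ (-s) := mul_le_mul (le_abs_self D)
        (rpow_le_rpow_of_nonpos hx (by linarith) (neg_nonpos.2 hs)) (by positivity) (abs_nonneg D)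
    _ = |D| * ‖|x| ^ (-s)‖ := by rw [norm_of_nonneg (by positivity)]

lemma SchwartzMap.exists_norm_le_mul_one_add_abs_rpow_neg {E : Type*} [NormedAddCommGroup E]
    [NormedSpace ℝ E] (ψ : SchwartzMap ℝ E) (s : ℝ) :
    ∃ B, 0 < B ∧ ∀ x, ‖ψ x‖ ≤ B * (1 + |x|) ^ (-s) := by
  obtain ⟨B, hB⟩ : ∃ B, ∀ x : ℝ, (1 + |x|) ^ ⌈s⌉₊ * ‖ψ x‖ ≤ B :=
    ⟨_, fun x => by simpa [norm_iteratedFDeriv_zero] using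
      ψ.one_add_le_sup_seminorm_apply (𝕜 := ℝ) (m := (⌈s⌉₊, 0)) le_rfl le_rfl x⟩
  refine ⟨max B 1, by positivity, fun x => ?_⟩
  have hx : 1 ≤ 1 + |x| := by linarith [abs_nonneg x]
  calc ‖ψ x‖ ≤ B * (1 + |x|) ^ (-(⌈s⌉₊ : ℝ)) := by
        rw [rpow_neg (by positivity), rpow_natCast, ← div_eq_mul_inv, le_div_iff₀ (by positivity),
          mul_comm]
        exact hB x
    _ ≤ max B 1 * (1 + |x|) ^ (-s) := mul_le_mul (le_max_left _ _)
        (rpow_le_rpow_of_exponent_le hx (neg_le_neg (Nat.le_ceil s))) (by positivity)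
        (by positivity)

lemma tsum_lintegral_enorm_ne_top_of_tsum_norm_le {ι α E : Type*} [Countable ι]
    [MeasurableSpace α] [NormedAddCommGroup E] {μ : Measure α} [IsFiniteMeasure μ]
    {F : ι → α → E} {M : ℝ} (hF : ∀ i, AEStronglyMeasurable (F i) μ)
    (hsum : ∀ x, Summable fun i => ‖F i x‖) (hM : ∀ x, ∑' i, ‖F i x‖ ≤ M) :
    ∑' i, ∫⁻ x, ‖F i x‖ₑ ∂μ ≠ ⊤ := by
  rw [← lintegral_tsum fun i => (hF i).enorm]
  refine ne_top_of_le_ne_top (lintegral_const (ENNReal.ofReal M) ▸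
    ENNReal.mul_ne_top ENNReal.ofReal_ne_top (measure_ne_top μ _)) (lintegral_mono fun x => ?_)
  simp_rw [← ofReal_norm]
  rw [← ENNReal.ofReal_tsum_of_nonneg (fun i => norm_nonneg _) (hsum x)]
  exact ENNReal.ofReal_le_ofReal (hM x)

lemma integral_sum_map_add_int_eq {E : Type*} [NormedAddCommGroup E] [NormedSpace ℝ E]
    [CompleteSpace E] {μ : Measure ℝ} [IsFiniteMeasure μ] {f : ℝ → E} {D s : ℝ} (hs : 1 < s)
    (hf : Continuous f) (hdecay : ∀ x, ‖f x‖ ≤ D * (1 + |x|) ^ (-s)) :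
    ∫ x, f x ∂(Measure.sum fun n : ℤ => μ.map (fun y => y + (n : ℝ)))
      = ∫ y, ∑' n : ℤ, f (y + n) ∂μ := by
  have hmeas : ∀ n : ℤ, AEStronglyMeasurable (fun y => f (y + n)) μ :=
    fun n => (hf.comp (continuous_add_const _)).aestronglyMeasurable
  have hbound : ∀ y (n : ℤ), ‖f (y + n)‖ ≤ D * (1 + |n + y|) ^ (-s) := fun y n => by
    rw [add_comm (n : ℝ)]; exact hdecay _
  have hsum : ∀ y, Summable fun n : ℤ => ‖f (y + n)‖ := fun y =>
    .of_nonneg_of_le (fun _ => norm_nonneg _) (hbound y)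
      ((summable_one_add_abs_int_add_rpow_neg hs y).mul_left D)
  have hD : 0 ≤ D := nonneg_of_mul_nonneg_left ((norm_nonneg _).trans (hdecay 0)) (by positivity)
  have hfin := tsum_lintegral_enorm_ne_top_of_tsum_norm_le hmeas hsum fun y =>
    calc ∑' n : ℤ, ‖f (y + n)‖ ≤ ∑' n : ℤ, D * (1 + |n + y|) ^ (-s) := (hsum y).tsum_le_tsum
          (hbound y) ((summable_one_add_abs_int_add_rpow_neg hs y).mul_left D)
      _ ≤ D * (2 ^ s * ∑' k : ℤ, (1 + |(k : ℝ)|) ^ (-s)) := by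
          rw [tsum_mul_left]
          exact mul_le_mul_of_nonneg_left (tsum_one_add_abs_int_add_rpow_neg_le hs y) hD
  have hint : Integrable f (Measure.sum fun n : ℤ => μ.map (fun y => y + (n : ℝ))) := by
    refine ⟨hf.aestronglyMeasurable, ?_⟩
    rw [HasFiniteIntegral, lintegral_sum_measure]
    simpa [lintegral_map hf.enorm.measurable (measurable_add_const _)] using hfin.lt_top
  rw [integral_sum_measure hint, integral_tsum hmeas hfin]
  exact tsum_congr fun n =>
    (MeasurableEquiv.addRight (n : ℝ)).measurableEmbedding.integral_map f

lemma integral_tsum_comp_add_int_eq_tsum_fourier {μ : Measure ℝ} [IsFiniteMeasure μ]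
    {g : ℝ → ℂ} {D s : ℝ} (hs : 1 < s) (hg : Continuous g)
    (hdecay : ∀ x, ‖g x‖ ≤ D * (1 + |x|) ^ (-s)) (hFg : Summable fun n : ℤ => ‖𝓕 g n‖) :
    ∫ y, ∑' n : ℤ, g (y + n) ∂μ = ∑' k : ℤ, 𝓕 g k * ∫ y, fourier k (y : UnitAddCircle) ∂μ := by
  have hpoisson := Real.tsum_eq_tsum_fourier_of_rpow_decay_of_summable hg hs
    (isBigO_cocompact_rpow_neg_of_norm_le (by linarith) hdecay) hFg.of_norm
  have hnorm : ∀ (k : ℤ) (y : ℝ), ‖𝓕 g k * fourier k (y : UnitAddCircle)‖ = ‖𝓕 g k‖ :=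
    fun k y => by
      rw [norm_mul, show ‖fourier k (y : UnitAddCircle)‖ = 1 from Circle.norm_coe _, mul_one]
  have hmeas : ∀ k : ℤ,
      AEStronglyMeasurable (fun y : ℝ => 𝓕 g k * fourier k (y : UnitAddCircle)) μ :=
    fun k => (continuous_const.mul
      ((fourier k).continuous.comp continuous_quotient_mk')).aestronglyMeasurable
  simp_rw [hpoisson, ← integral_const_mul]
  exact integral_tsum hmeas (tsum_lintegral_enorm_ne_top_of_tsum_norm_le hmeas
    (by simpa only [hnorm] using fun _ => hFg) (fun y => by simp only [hnorm]; exact le_rfl))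

lemma fourier_exp_neg_mul_mul (f : ℝ → ℂ) (ξ w : ℝ) :
    𝓕 (fun x : ℝ => Complex.exp (-(2 * (π : ℂ) * Complex.I * x * ξ)) * f x) w = 𝓕 f (w + ξ) := by
  simp_rw [Real.fourier_real_eq_integral_exp_smul, smul_eq_mul, ← mul_assoc, ← Complex.exp_add]
  congr! 4
  push_cast
  ring

lemma norm_tsum_mul_le_of_decay {u v : ℤ → ℂ} {B C a s ξ : ℝ} (hB : 0 ≤ B) (hC : 0 ≤ C)
    (ha : 0 ≤ a) (hs : 1 < s) (hu : ∀ k : ℤ, ‖u k‖ ≤ B * (1 + |k + ξ|) ^ (-(a + s)))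
    (hv : ∀ k : ℤ, ‖v k‖ ≤ C * (1 + |(k : ℝ)|) ^ (-a)) :
    ‖∑' k, u k * v k‖ ≤ B * C * (2 ^ s * ∑' k : ℤ, (1 + |(k : ℝ)|) ^ (-s)) * (1 + |ξ|) ^ (-a) := by
  have hterm : ∀ k : ℤ, ‖u k * v k‖ ≤ B * C * (1 + |ξ|) ^ (-a) * (1 + |k + ξ|) ^ (-s) := by
    intro k
    calc ‖u k * v k‖ ≤ B * (1 + |k + ξ|) ^ (-(a + s)) * (C * (1 + |(k : ℝ)|) ^ (-a)) := by
          rw [norm_mul]; exact mul_le_mul (hu k) (hv k) (norm_nonneg _) (by positivity)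
      _ = B * C * (1 + |k + ξ|) ^ (-s) * ((1 + |k + ξ|) ^ (-a) * (1 + |(k : ℝ)|) ^ (-a)) := by
          rw [neg_add, rpow_add (by positivity)]; ring
      _ ≤ B * C * (1 + |k + ξ|) ^ (-s) * (1 + |ξ|) ^ (-a) :=
          mul_le_mul_of_nonneg_left (one_add_abs_add_rpow_neg_mul_le ha _ _) (by positivity)
      _ = B * C * (1 + |ξ|) ^ (-a) * (1 + |k + ξ|) ^ (-s) := by ring
  have hsum := (summable_one_add_abs_int_add_rpow_neg hs ξ).mul_left (B * C * (1 + |ξ|) ^ (-a))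
  have hsum_norm := hsum.of_nonneg_of_le (fun _ => norm_nonneg _) hterm
  calc ‖∑' k, u k * v k‖ ≤ ∑' k : ℤ, B * C * (1 + |ξ|) ^ (-a) * (1 + |k + ξ|) ^ (-s) :=
        (norm_tsum_le_tsum_norm hsum_norm).trans (hsum_norm.tsum_le_tsum hterm hsum)
    _ ≤ B * C * (1 + |ξ|) ^ (-a) * (2 ^ s * ∑' k : ℤ, (1 + |(k : ℝ)|) ^ (-s)) := by
        rw [tsum_mul_left]
        exact mul_le_mul_of_nonneg_left (tsum_one_add_abs_int_add_rpow_neg_le hs ξ) (by positivity)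
    _ = _ := by ring

theorem stmt_7_general (m₀ : Measure ℝ) [IsFiniteMeasure m₀]
    (mper : Measure ℝ)
    (hper : mper = Measure.sum (fun n : ℤ => Measure.map (fun y => y + (n : ℝ)) m₀))
    (φ : SchwartzMap ℝ ℂ) (C a : ℝ) (hC : 0 < C) (ha : 0 < a)
    (hdecay : ∀ k : ℤ,
      ‖∫ x, Complex.exp (-(2 * (π : ℂ) * Complex.I * (k : ℂ) * (x : ℂ))) ∂m₀‖
        ≤ C * (1 + |(k : ℝ)|) ^ (-a)) :
    ∃ C' : ℝ, 0 < C' ∧ ∀ ξ : ℝ,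
      ‖∫ x, Complex.exp (-(2 * (π : ℂ) * Complex.I * (x : ℂ) * (ξ : ℂ))) * φ x ∂mper‖
        ≤ C' * (1 + |ξ|) ^ (-a) := by
  obtain ⟨D, -, hφ⟩ := φ.exists_norm_le_mul_one_add_abs_rpow_neg 2
  obtain ⟨B, hB, hFφ⟩ := (𝓕 φ).exists_norm_le_mul_one_add_abs_rpow_neg (a + 2)
  have hS : 0 < ∑' k : ℤ, (1 + |(k : ℝ)|) ^ (-(2 : ℝ)) := by
    simpa using (summable_one_add_abs_int_add_rpow_neg one_lt_two 0).tsum_pos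
      (fun _ => by positivity) 0 (by positivity)
  have hcoeff : ∀ k : ℤ, ‖∫ y, fourier k (y : UnitAddCircle) ∂m₀‖ ≤ C * (1 + |(k : ℝ)|) ^ (-a) := by
    intro k
    simpa [fourier_coe_apply, ← neg_mul, mul_right_comm _ Complex.I] using hdecay (-k)
  refine ⟨B * C * (2 ^ (2 : ℝ) * ∑' k : ℤ, (1 + |(k : ℝ)|) ^ (-(2 : ℝ))), by positivity,
    fun ξ => ?_⟩
  set g : ℝ → ℂ := fun x => Complex.exp (-(2 * (π : ℂ) * Complex.I * x * ξ)) * φ x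
  have hg : Continuous g := by fun_prop
  have hg_decay : ∀ x, ‖g x‖ ≤ D * (1 + |x|) ^ (-(2 : ℝ)) := fun x => by
    simpa [g, Complex.norm_exp] using hφ x
  have hFg : ∀ w, ‖𝓕 g w‖ ≤ B * (1 + |w + ξ|) ^ (-(a + 2)) := fun w => by
    simpa [g, fourier_exp_neg_mul_mul, SchwartzMap.fourier_coe] using hFφ (w + ξ)
  have hFg_sum : Summable fun k : ℤ => ‖𝓕 g k‖ :=
    ((summable_one_add_abs_int_add_rpow_neg (by linarith) ξ).mul_left B).of_nonneg_of_le
      (fun _ => norm_nonneg _) (fun k => hFg k)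
  subst hper
  rw [integral_sum_map_add_int_eq one_lt_two hg hg_decay,
    integral_tsum_comp_add_int_eq_tsum_fourier one_lt_two hg hg_decay hFg_sum]
  exact norm_tsum_mul_le_of_decay hB.le hC.le ha.le one_lt_two (fun k => hFg k) hcoeff

/-- Lifting lemma (Lemma 9.A.4 of Wolff, second half). If the Fourier
coefficients of m decay like `C(1+|k|)^{-α}` and φ is Schwartz, then the Fourier
transform of dm′(x) = φ(x) dm({x}) decays like `C′(1+|ξ|)^{-α}` on all of ℝ. -/
theorem stmt_7 (m₀ : Measure ℝ) [IsFiniteMeasure m₀]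
    (hsupp : m₀ (Set.Ico (0 : ℝ) 1)ᶜ = 0)
    (mper : Measure ℝ)
    (hper : mper = Measure.sum (fun n : ℤ => Measure.map (fun y => y + (n : ℝ)) m₀))
    (φ : SchwartzMap ℝ ℂ) (C a : ℝ) (hC : 0 < C) (ha : 0 < a)
    (hdecay : ∀ k : ℤ,
      ‖∫ x, Complex.exp (-(2 * (π : ℂ) * Complex.I * (k : ℂ) * (x : ℂ))) ∂m₀‖
        ≤ C * (1 + |(k : ℝ)|) ^ (-a)) :
    ∃ C' : ℝ, 0 < C' ∧ ∀ ξ : ℝ,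
      ‖∫ x, Complex.exp (-(2 * (π : ℂ) * Complex.I * (x : ℂ) * (ξ : ℂ))) * φ x ∂mper‖
        ≤ C' * (1 + |ξ|) ^ (-a) :=
  stmt_7_general m₀ mper hper φ C a hC ha hdecay
end
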